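/- Let U ∈ ℝ^{n×p} satisfy UᵀU = I_p and let T = {UXᵀ + YUᵀ : X,Y ∈ ℝ^{n×p}} ⊆ ℝ^{n×n}. Then the map P_T(M) = UUᵀM + MUUᵀ − UUᵀMUUᵀ is the orthogonal projection of ℝ^{n×n} onto T with respect to the Frobenius (trace) inner product ⟨M,N⟩ = trace(MᵀN): P_T is linear, idempotent, self-adjoint, its range equals T, and M − P_T(M) is orthogonal to every element of T for every M. -/

import Mathlib

open Matrix MeasureTheory

open scoped Classical

/-- Keep the entries of `M` indexed by `S` and zero out the rest. -/
noncomputable def projS {n : ℕ} (S : Set (Fin n × Fin n)) (M : Matrix (Fin n) (Fin n) ℝ) :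
    Matrix (Fin n) (Fin n) ℝ :=
  Matrix.of fun i j => if (i, j) ∈ S then M i j else 0

/-- Zero out the entries of `M` indexed by `S` (projection onto the complement). -/
noncomputable def zeroOn {n : ℕ} (S : Set (Fin n × Fin n)) (M : Matrix (Fin n) (Fin n) ℝ) :
    Matrix (Fin n) (Fin n) ℝ :=
  Matrix.of fun i j => if (i, j) ∈ S then 0 else M i j

/-- Entrywise ℓ₁ norm. -/
noncomputable def l1Norm {n : ℕ} (M : Matrix (Fin n) (Fin n) ℝ) : ℝ := ∑ i, ∑ j, |M i j|

/-- Entrywise ℓ∞ norm (max of absolute values of the entries). -/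
noncomputable def linfNorm {n : ℕ} (M : Matrix (Fin n) (Fin n) ℝ) : ℝ :=
  sSup (Set.range fun q : Fin n × Fin n => |M q.1 q.2|)

/-- Frobenius norm. -/
noncomputable def frobNorm {n : ℕ} (M : Matrix (Fin n) (Fin n) ℝ) : ℝ :=
  Real.sqrt (∑ i, ∑ j, (M i j) ^ 2)

/-- The positive semidefinite square root (removed from Mathlib; old definition restored). -/
noncomputable def Matrix.PosSemidef.sqrt {n : Type*} [Fintype n] [DecidableEq n] {A : Matrix n n ℝ}
    (hA : A.PosSemidef) : Matrix n n ℝ :=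
  hA.1.eigenvectorUnitary.1 * diagonal ((↑) ∘ (√·) ∘ hA.1.eigenvalues) *
  (star hA.1.eigenvectorUnitary : Matrix n n ℝ)

/-- Nuclear norm: the sum of the singular values, i.e. the trace of `√(MᴴM)`. -/
noncomputable def nuclearNorm {n : ℕ} (M : Matrix (Fin n) (Fin n) ℝ) : ℝ :=
  (Matrix.posSemidef_conjTranspose_mul_self M).sqrt.trace

/-- Spectral norm: the operator norm as a map between Euclidean spaces. -/
noncomputable def specNorm {m l : Type*} [Fintype m] [Fintype l] [DecidableEq l]
    (M : Matrix m l ℝ) : ℝ :=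
  ‖LinearMap.toContinuousLinearMap (Matrix.toEuclideanLin M)‖

/-- Entrywise sign matrix. -/
noncomputable def sgnMat {n : ℕ} (M : Matrix (Fin n) (Fin n) ℝ) : Matrix (Fin n) (Fin n) ℝ :=
  Matrix.of fun i j => Real.sign (M i j)

/-- The support of a matrix, as a set of index pairs. -/
def suppSet {n : ℕ} (M : Matrix (Fin n) (Fin n) ℝ) : Set (Fin n × Fin n) :=
  {q | M q.1 q.2 ≠ 0}

/-- A matrix is a valid clustering matrix iff for some assignment of nodes to clusters,
`K i j = 1` when `i, j` are in the same cluster and `K i j = 0` otherwise. -/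
def IsValidClustering {n : ℕ} (K : Matrix (Fin n) (Fin n) ℝ) : Prop :=
  ∃ f : Fin n → Fin n, ∀ i j, K i j = if f i = f j then 1 else 0

/-- Objective of the convex program CP_η. -/
noncomputable def cpObj {n : ℕ} (η : ℝ) (B K : Matrix (Fin n) (Fin n) ℝ) : ℝ :=
  η * l1Norm B + (1 - η) * nuclearNorm K

/-- Feasibility for the convex program: `P_Ωobs (B + K) = P_Ωobs (I + A)`. -/
def cpFeasible {n : ℕ} (Obs : Set (Fin n × Fin n)) (A B K : Matrix (Fin n) (Fin n) ℝ) : Prop :=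
  projS Obs (B + K) = projS Obs (1 + A)

/-- Number of observed disagreements of the clustering matrix `K` with the observed graph. -/
noncomputable def disagreements {n : ℕ} (Obs : Set (Fin n × Fin n))
    (A K : Matrix (Fin n) (Fin n) ℝ) : ℕ :=
  {q : Fin n × Fin n | q.1 ≠ q.2 ∧ q ∈ Obs ∧ A q.1 q.2 ≠ K q.1 q.2}.ncard

/-- Size of cluster `j` under the assignment `c`. -/
noncomputable def clusterSize {n p : ℕ} (c : Fin n → Fin p) (j : Fin p) : ℕ :=
  {i : Fin n | c i = j}.ncard

/-- Minimum cluster size. -/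
noncomputable def KminVal {n p : ℕ} (c : Fin n → Fin p) : ℕ :=
  sInf (Set.range fun j => clusterSize c j)

/-- The valid clustering matrix associated to the assignment `c`. -/
noncomputable def Kmat {n p : ℕ} (c : Fin n → Fin p) : Matrix (Fin n) (Fin n) ℝ :=
  Matrix.of fun i j => if c i = c j then 1 else 0

/-- The matrix of observed disagreements of the clustering `c`. -/
noncomputable def Bstar {n p : ℕ} (Obs : Set (Fin n × Fin n)) (A : Matrix (Fin n) (Fin n) ℝ)
    (c : Fin n → Fin p) : Matrix (Fin n) (Fin n) ℝ :=
  projS Obs (A + 1 - Kmat c)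

/-- Index set of Γ: observed non-disagreement entries (includes the diagonal). -/
def GammaSet {n p : ℕ} (Obs : Set (Fin n × Fin n)) (A : Matrix (Fin n) (Fin n) ℝ)
    (c : Fin n → Fin p) : Set (Fin n × Fin n) :=
  {q | q ∈ Obs ∧ Bstar Obs A c q.1 q.2 = 0}

/-- The matrix `U` whose `j`-th column is `K_j^{-1/2}` on the indices of cluster `j`. -/
noncomputable def Umat {n p : ℕ} (c : Fin n → Fin p) : Matrix (Fin n) (Fin p) ℝ :=
  Matrix.of fun i j => if c i = j then (Real.sqrt (clusterSize c j))⁻¹ else 0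

/-- The subspace `T = {U Xᵀ + Y Uᵀ}` as a set of matrices. -/
def Tspace {n p : ℕ} (U : Matrix (Fin n) (Fin p) ℝ) : Set (Matrix (Fin n) (Fin n) ℝ) :=
  {M | ∃ X Y : Matrix (Fin n) (Fin p) ℝ, M = U * Xᵀ + Y * Uᵀ}

/-- Orthogonal projection onto `T`. -/
noncomputable def PT {n p : ℕ} (U : Matrix (Fin n) (Fin p) ℝ) (M : Matrix (Fin n) (Fin n) ℝ) :
    Matrix (Fin n) (Fin n) ℝ :=
  U * Uᵀ * M + M * (U * Uᵀ) - U * Uᵀ * M * (U * Uᵀ)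

/-- `d_{i,k}`: number of "bad" (unobserved or disagreeing) entries between node `i`
and cluster `k`. -/
noncomputable def dval {n p : ℕ} (Obs : Set (Fin n × Fin n)) (A : Matrix (Fin n) (Fin n) ℝ)
    (c : Fin n → Fin p) (i : Fin n) (k : Fin p) : ℕ :=
  if k = c i then {j : Fin n | c j = k ∧ ((i, j) ∉ Obs ∨ A i j = 0)}.ncard
  else {j : Fin n | c j = k ∧ ((i, j) ∉ Obs ∨ A i j = 1)}.ncard

/-- `D_max`: the largest fraction of bad entries between a node and a cluster. -/
noncomputable def Dmax {n p : ℕ} (Obs : Set (Fin n × Fin n)) (A : Matrix (Fin n) (Fin n) ℝ)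
    (c : Fin n → Fin p) : ℝ :=
  sSup (Set.range fun q : Fin n × Fin p =>
    (dval Obs A c q.1 q.2 : ℝ) / min (clusterSize c q.2 : ℝ) (clusterSize c (c q.1) : ℝ))

/-- `P_T` is the orthogonal projection onto `T` for the Frobenius inner product. -/
theorem PT_is_orthogonal_projection
    {n p : ℕ} (U : Matrix (Fin n) (Fin p) ℝ) (hU : Uᵀ * U = 1) :
    (∀ (a : ℝ) (M N : Matrix (Fin n) (Fin n) ℝ), PT U (a • M + N) = a • PT U M + PT U N) ∧
      (∀ M : Matrix (Fin n) (Fin n) ℝ, PT U (PT U M) = PT U M) ∧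
      (∀ M N : Matrix (Fin n) (Fin n) ℝ, ((PT U M)ᵀ * N).trace = (Mᵀ * PT U N).trace) ∧
      (∀ M : Matrix (Fin n) (Fin n) ℝ, PT U M ∈ Tspace U) ∧
      (∀ M ∈ Tspace U, PT U M = M) ∧
      (∀ M : Matrix (Fin n) (Fin n) ℝ, ∀ N ∈ Tspace U, ((M - PT U M)ᵀ * N).trace = 0) := by
  
  have h1 : ∀ Z : Matrix (Fin p) (Fin n) ℝ, Uᵀ * (U * Z) = Z := by
    intro Z; rw [← Matrix.mul_assoc, hU, Matrix.one_mul]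
  have hfix : ∀ M ∈ Tspace U, PT U M = M := by
    rintro M ⟨X, Y, rfl⟩
    simp only [PT, Matrix.mul_add, Matrix.add_mul, Matrix.mul_assoc, h1]
    abel
  have hself : ∀ M N : Matrix (Fin n) (Fin n) ℝ,
      ((PT U M)ᵀ * N).trace = (Mᵀ * PT U N).trace := by
    intro M N
    simp only [PT, Matrix.transpose_add, Matrix.transpose_sub, Matrix.transpose_mul,
      Matrix.transpose_transpose, Matrix.mul_add, Matrix.add_mul, Matrix.mul_sub,
      Matrix.sub_mul, Matrix.trace_add, Matrix.trace_sub]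
    rw [← Matrix.mul_assoc (U * Uᵀ) Mᵀ (U * Uᵀ)]
    have e1 : (U * Uᵀ * Mᵀ * N).trace = (Mᵀ * (N * (U * Uᵀ))).trace := by
      rw [Matrix.mul_assoc, Matrix.trace_mul_comm, Matrix.mul_assoc]
    have e2 : (U * Uᵀ * Mᵀ * (U * Uᵀ) * N).trace
        = (Mᵀ * (U * Uᵀ * N * (U * Uᵀ))).trace := by
      rw [Matrix.mul_assoc (U * Uᵀ * Mᵀ) (U * Uᵀ) N,
        Matrix.mul_assoc (U * Uᵀ) Mᵀ (U * Uᵀ * N), Matrix.trace_mul_comm,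
        Matrix.mul_assoc]
    have e3 : (Mᵀ * (U * Uᵀ) * N).trace = (Mᵀ * (U * Uᵀ * N)).trace := by
      rw [Matrix.mul_assoc]
    rw [e1, e2, e3]
  refine ⟨?_, ?_, hself, ?_, hfix, ?_⟩
  · intro a M N
    simp only [PT, Matrix.mul_add, Matrix.add_mul, Matrix.mul_smul, Matrix.smul_mul,
      smul_add, smul_sub]
    abel
  · intro M
    have hmem : PT U M ∈ Tspace U := by
      refine ⟨Mᵀ * U, (M - U * Uᵀ * M) * U, ?_⟩
      simp only [PT, Matrix.transpose_mul, Matrix.transpose_transpose, Matrix.sub_mul,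
        Matrix.mul_assoc]
      abel
    exact hfix _ hmem
  · intro M
    refine ⟨Mᵀ * U, (M - U * Uᵀ * M) * U, ?_⟩
    simp only [PT, Matrix.transpose_mul, Matrix.transpose_transpose, Matrix.sub_mul,
      Matrix.mul_assoc]
    abel
  · intro M N hN
    rw [Matrix.transpose_sub, Matrix.sub_mul, Matrix.trace_sub, hself,
      hfix N hN, sub_self]
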